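/- arXiv:2507.03207 — 8 statements merged into one kernel-verified Lean document; each statement's English description precedes it below -/
import Mathlib

section
/- Let λ₀ > 0 and define λ_{i+1} = 1 - 2·∏_{k=0}^{i} (1+λ_k)^{-1} + (1+λ₀)·∏_{k=0}^{i} (1+λ_k)^{-2}. Then the sequence is strictly increasing for i ≥ 1: λ₁ < λ₂ < λ₃ < ⋯. -/
theorem eigenvalue_seq_strict_mono (l : ℕ → ℝ) (h0 : 0 < l 0)
    (hrec : ∀ i, l (i + 1) =
      1 - 2 * ∏ k ∈ Finset.range (i + 1), (1 + l k)⁻¹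
        + (1 + l 0) * ∏ k ∈ Finset.range (i + 1), ((1 + l k)⁻¹) ^ 2) :
    ∀ i, 1 ≤ i → l i < l (i + 1) := by
  have hpos : ∀ i, 0 < l i := by
    intro i
    cases i with
    | zero => exact h0
    | succ j =>
      rw [hrec j, Finset.prod_pow]
      set x := ∏ k ∈ Finset.range (j + 1), (1 + l k)⁻¹
      nlinarith [sq_nonneg ((1 + l 0) * x - 1), h0]
  have h1 : ∀ i, 0 < 1 + l i := fun i => by linarith [hpos i]
  have hinvpos : ∀ i, 0 < (1 + l i)⁻¹ := fun i => inv_pos.mpr (h1 i)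
  have hinv1 : ∀ i, (1 + l i)⁻¹ < 1 := by
    intro i
    rw [inv_lt_one_iff₀]
    right; linarith [hpos i]
  have hP : ∀ n, 0 < ∏ k ∈ Finset.range n, (1 + l k)⁻¹ := by
    intro n; exact Finset.prod_pos fun k _ => hinvpos k
  have hQ : ∀ j, (1 + l 0) * ∏ k ∈ Finset.range (j + 1), (1 + l k)⁻¹ ≤ 1 := by
    intro j
    rw [Finset.prod_range_succ']
    rw [mul_comm, mul_assoc, inv_mul_cancel₀ (ne_of_gt (h1 0)), mul_one]
    exact Finset.prod_le_one (fun k _ => (hinvpos _).le) (fun k _ => (hinv1 _).le)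
  intro i hi
  cases i with
  | zero => omega
  | succ j =>
    have hB : ∏ k ∈ Finset.range (j + 1 + 1), (1 + l k)⁻¹ =
        (∏ k ∈ Finset.range (j + 1), (1 + l k)⁻¹) * (1 + l (j + 1))⁻¹ :=
      Finset.prod_range_succ _ _
    rw [hrec j, hrec (j + 1), Finset.prod_pow, Finset.prod_pow, hB]
    set A := ∏ k ∈ Finset.range (j + 1), (1 + l k)⁻¹ with hAdef
    set c := (1 + l (j + 1))⁻¹ with hcdef
    have hAp : 0 < A := hP (j + 1)
    have hq : (1 + l 0) * A ≤ 1 := hQ j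
    have hc1 : c < 1 := hinv1 (j + 1)
    have hcp : 0 < c := hinvpos (j + 1)
    have hD : 0 < A * (1 - c) := mul_pos hAp (by linarith)
    have key : (1 + l 0) * A * (A * (1 - c) * (1 + c)) ≤ 1 * (A * (1 - c) * (1 + c)) :=
      mul_le_mul_of_nonneg_right hq (by nlinarith)
    nlinarith [key, mul_pos hD (show (0:ℝ) < 1 - c by linarith)]
end

section
/- Let λ₀ > 0 and define λ_{i+1} = 1 - 2·∏_{k=0}^{i} (1+λ_k)^{-1} + (1+λ₀)·∏_{k=0}^{i} (1+λ_k)^{-2}. Then 1 - λ_{i+1} ≤ 2·(1+λ₀)^{-1}·exp(-(i-1)·γ) for all i ≥ 1, where γ = λ₀/(1+2λ₀). In particular λ_i → 1 as i → ∞. -/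
theorem eigenvalue_seq_exp_convergence (l : ℕ → ℝ) (h0 : 0 < l 0)
    (hrec : ∀ i, l (i + 1) =
      1 - 2 * ∏ k ∈ Finset.range (i + 1), (1 + l k)⁻¹
        + (1 + l 0) * ∏ k ∈ Finset.range (i + 1), ((1 + l k)⁻¹) ^ 2) :
    (∀ i : ℕ, 1 ≤ i →
      1 - l (i + 1) ≤ 2 * (1 + l 0)⁻¹ * Real.exp (-((i : ℝ) - 1) * (l 0 / (1 + 2 * l 0)))) ∧
    Filter.Tendsto l Filter.atTop (nhds 1) := by
  set c : ℝ := 1 + l 0 with hc_def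
  have hc : 1 < c := by simp only [hc_def]; linarith
  have hc0 : 0 < c := by linarith
  set P : ℕ → ℝ := fun i => ∏ k ∈ Finset.range (i + 1), (1 + l k)⁻¹ with hP
  have hrec' : ∀ i, l (i + 1) = 1 - 2 * P i + c * (P i) ^ 2 := by
    intro i
    rw [hrec i, Finset.prod_pow]
  -- lower bound for all terms after the first
  have hlow : ∀ i, l 0 / (1 + l 0) ≤ l (i + 1) := by
    intro i
    rw [hrec' i, div_le_iff₀ (by linarith : (0:ℝ) < 1 + l 0)]
    nlinarith [sq_nonneg (c * P i - 1)]
  have hl1pos : 0 < l 0 / (1 + l 0) := div_pos h0 (by linarith)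
  have hpos : ∀ k, 0 < 1 + l k := by
    intro k
    cases k with
    | zero => linarith
    | succ n => have := hlow n; linarith
  have hPpos : ∀ i, 0 < P i := by
    intro i
    exact Finset.prod_pos fun k _ => inv_pos.mpr (hpos k)
  set γ : ℝ := l 0 / (1 + 2 * l 0) with hγ_def
  have hγpos : 0 < γ := div_pos h0 (by linarith)
  set a : ℝ := 1 + l 0 / (1 + l 0) with ha_def
  have ha : 1 < a := by simp only [ha_def]; linarith
  have ha0 : 0 < a := by linarith
  -- a⁻¹ = 1 - γ
  have hainv : a⁻¹ = 1 - γ := by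
    rw [ha_def, hγ_def]
    field_simp
    ring
  have hγlt1 : γ < 1 := by
    have : 0 < a⁻¹ := inv_pos.mpr ha0
    linarith [hainv ▸ this]
  -- product bound
  have hPbound : ∀ i, P i ≤ c⁻¹ * (a⁻¹) ^ i := by
    intro i
    have h1 : P i = (∏ k ∈ Finset.range i, (1 + l (k + 1))⁻¹) * (1 + l 0)⁻¹ :=
      Finset.prod_range_succ' _ i
    have h2 : ∏ k ∈ Finset.range i, (1 + l (k + 1))⁻¹ ≤ (a⁻¹) ^ i := by
      calc ∏ k ∈ Finset.range i, (1 + l (k + 1))⁻¹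
          ≤ ∏ k ∈ Finset.range i, a⁻¹ := by
            apply Finset.prod_le_prod
            · intro k _; exact le_of_lt (inv_pos.mpr (hpos (k + 1)))
            · intro k _
              apply inv_anti₀ ha0
              have := hlow k
              rw [ha_def]; linarith
        _ = (a⁻¹) ^ i := by rw [Finset.prod_const, Finset.card_range]
    rw [h1]
    have hcinv : (1 + l 0)⁻¹ = c⁻¹ := by rw [hc_def]
    rw [hcinv, mul_comm (c⁻¹) _]
    exact mul_le_mul_of_nonneg_right h2 (le_of_lt (inv_pos.mpr hc0))
  -- a⁻¹ ≤ exp(-γ)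
  have hexp : a⁻¹ ≤ Real.exp (-γ) := by
    rw [hainv]
    linarith [Real.add_one_le_exp (-γ)]
  have hainvpos : 0 < a⁻¹ := inv_pos.mpr ha0
  have hPexp : ∀ i : ℕ, P i ≤ c⁻¹ * Real.exp (-(i : ℝ) * γ) := by
    intro i
    calc P i ≤ c⁻¹ * (a⁻¹) ^ i := hPbound i
      _ ≤ c⁻¹ * (Real.exp (-γ)) ^ i := by
          apply mul_le_mul_of_nonneg_left _ (le_of_lt (inv_pos.mpr hc0))
          exact pow_le_pow_left₀ (le_of_lt hainvpos) hexp i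
      _ = c⁻¹ * Real.exp (-(i : ℝ) * γ) := by
          rw [← Real.exp_nat_mul]; ring_nf
  -- key inequality for all i
  have hkey : ∀ i : ℕ, 1 - l (i + 1) ≤ 2 * c⁻¹ * Real.exp (-((i : ℝ) - 1) * γ) := by
    intro i
    have h1 : 1 - l (i + 1) ≤ 2 * P i := by
      rw [hrec' i]
      nlinarith [sq_nonneg (P i), hc0, hPpos i]
    have h2 : Real.exp (-(i : ℝ) * γ) ≤ Real.exp (-((i : ℝ) - 1) * γ) := by
      apply Real.exp_le_exp.mpr
      nlinarith [hγpos]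
    calc 1 - l (i + 1) ≤ 2 * P i := h1
      _ ≤ 2 * (c⁻¹ * Real.exp (-(i : ℝ) * γ)) := by linarith [hPexp i]
      _ = 2 * c⁻¹ * Real.exp (-(i : ℝ) * γ) := by ring
      _ ≤ 2 * c⁻¹ * Real.exp (-((i : ℝ) - 1) * γ) := by
          apply mul_le_mul_of_nonneg_left h2
          positivity
  constructor
  · intro i _
    exact hkey i
  · -- l (i+1) ≤ 1
    have hup : ∀ i : ℕ, l (i + 1) ≤ 1 := by
      intro i
      rw [hrec' i]
      have hcP : c * P i ≤ 1 := by
        have h1 : P i ≤ c⁻¹ * (a⁻¹) ^ i := hPbound i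
        have h2 : (a⁻¹) ^ i ≤ 1 := pow_le_one₀ (le_of_lt hainvpos) (by rw [hainv]; linarith)
        have : P i ≤ c⁻¹ := by
          calc P i ≤ c⁻¹ * (a⁻¹) ^ i := h1
            _ ≤ c⁻¹ * 1 := by
                apply mul_le_mul_of_nonneg_left h2 (le_of_lt (inv_pos.mpr hc0))
            _ = c⁻¹ := mul_one _
        calc c * P i ≤ c * c⁻¹ := mul_le_mul_of_nonneg_left this (le_of_lt hc0)
          _ = 1 := mul_inv_cancel₀ (ne_of_gt hc0)
      nlinarith [hPpos i]
    -- squeeze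
    have hlim : Filter.Tendsto (fun i : ℕ => l (i + 1)) Filter.atTop (nhds 1) := by
      have hge : ∀ i : ℕ, 1 - 2 * c⁻¹ * Real.exp (-((i : ℝ) - 1) * γ) ≤ l (i + 1) := by
        intro i; linarith [hkey i]
      have hexp0 : Filter.Tendsto
          (fun i : ℕ => Real.exp (-((i : ℝ) - 1) * γ)) Filter.atTop (nhds 0) := by
        have heq : ∀ i : ℕ, Real.exp (-((i : ℝ) - 1) * γ)
            = Real.exp γ * (Real.exp (-γ)) ^ i := by
          intro i
          rw [← Real.exp_nat_mul, ← Real.exp_add]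
          ring_nf
        simp only [heq]
        have habs : |Real.exp (-γ)| < 1 := by
          rw [abs_of_pos (Real.exp_pos _)]
          exact Real.exp_lt_one_iff.mpr (by linarith)
        have := tendsto_pow_atTop_nhds_zero_of_abs_lt_one habs
        have h := this.const_mul (Real.exp γ)
        simpa using h
      have hlo : Filter.Tendsto
          (fun i : ℕ => 1 - 2 * c⁻¹ * Real.exp (-((i : ℝ) - 1) * γ))
          Filter.atTop (nhds 1) := by
        have h := (hexp0.const_mul (2 * c⁻¹)).const_sub 1
        simpa using h
      exact tendsto_of_tendsto_of_tendsto_of_le_of_le hlo tendsto_const_nhds hge hup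
    exact (Filter.tendsto_add_atTop_iff_nat 1).mp hlim
end

section
/- Let λ₀ > 0 and define λ_{i+1} = 1 - 2·∏_{k=0}^{i} (1+λ_k)^{-1} + (1+λ₀)·∏_{k=0}^{i} (1+λ_k)^{-2}. Then for i ≥ 1, ∏_{k=0}^{i} (1+λ_k)^{-1} ≤ (2/(1+2λ₀))·exp(-(i-1)·λ₀/(1+2λ₀)). -/
theorem eigenvalue_seq_product_bound (l : ℕ → ℝ) (h0 : 0 < l 0)
    (hrec : ∀ i, l (i + 1) =
      1 - 2 * ∏ k ∈ Finset.range (i + 1), (1 + l k)⁻¹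
        + (1 + l 0) * ∏ k ∈ Finset.range (i + 1), ((1 + l k)⁻¹) ^ 2) :
    ∀ i : ℕ, 1 ≤ i →
      ∏ k ∈ Finset.range (i + 1), (1 + l k)⁻¹ ≤
        (2 / (1 + 2 * l 0)) * Real.exp (-(((i : ℝ) - 1) * l 0 / (1 + 2 * l 0))) := by
  set a := l 0 with ha
  have hA : (0:ℝ) < 1 + a := by linarith
  have hB : (0:ℝ) < 1 + 2 * a := by linarith
  -- quadratic lower bound
  have quad : ∀ P : ℝ, (1 + 2 * a) / (1 + a) ≤ 1 + (1 - 2 * P + (1 + a) * P ^ 2) := by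
    intro P
    rw [div_le_iff₀ hA]
    nlinarith [sq_nonneg ((1 + a) * P - 1)]
  have hge : ∀ i, (1 + 2 * a) / (1 + a) ≤ 1 + l (i + 1) := by
    intro i
    have h := hrec i
    rw [Finset.prod_pow] at h
    rw [h]
    exact quad _
  have hpos : ∀ k, 0 < 1 + l k := by
    intro k
    cases k with
    | zero => exact hA
    | succ n => exact lt_of_lt_of_le (div_pos hB hA) (hge n)
  have hinv : ∀ i, (1 + l (i + 1))⁻¹ ≤ (1 + a) / (1 + 2 * a) := by
    intro i
    rw [show (1 + a) / (1 + 2 * a) = ((1 + 2 * a) / (1 + a))⁻¹ by rw [inv_div]]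
    exact inv_anti₀ (div_pos hB hA) (hge i)
  have hPpos : ∀ i, 0 < ∏ k ∈ Finset.range (i + 1), (1 + l k)⁻¹ := by
    intro i
    exact Finset.prod_pos fun k _ => inv_pos.mpr (hpos k)
  -- main inductive bound
  have main : ∀ n : ℕ, ∏ k ∈ Finset.range (n + 2), (1 + l k)⁻¹ ≤
      (1 / (1 + 2 * a)) * ((1 + a) / (1 + 2 * a)) ^ n := by
    intro n
    induction n with
    | zero =>
      rw [Finset.prod_range_succ, Finset.prod_range_one, pow_zero, mul_one]
      have h1 : (1 + l 0)⁻¹ = (1 + a)⁻¹ := by rw [← ha]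
      calc (1 + l 0)⁻¹ * (1 + l 1)⁻¹ ≤ (1 + a)⁻¹ * ((1 + a) / (1 + 2 * a)) := by
            rw [h1]
            exact mul_le_mul_of_nonneg_left (hinv 0) (le_of_lt (inv_pos.mpr hA))
        _ = 1 / (1 + 2 * a) := by field_simp
    | succ n ih =>
      rw [Finset.prod_range_succ]
      calc (∏ k ∈ Finset.range (n + 2), (1 + l k)⁻¹) * (1 + l (n + 2))⁻¹
          ≤ ((1 / (1 + 2 * a)) * ((1 + a) / (1 + 2 * a)) ^ n) * ((1 + a) / (1 + 2 * a)) := by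
            apply mul_le_mul ih (hinv (n + 1)) (le_of_lt (inv_pos.mpr (hpos (n + 2))))
            positivity
        _ = (1 / (1 + 2 * a)) * ((1 + a) / (1 + 2 * a)) ^ (n + 1) := by ring
  intro i hi
  obtain ⟨n, rfl⟩ : ∃ n, i = n + 1 := ⟨i - 1, by omega⟩
  have h1 := main n
  have hx : (0:ℝ) ≤ 1 - a / (1 + 2 * a) := by
    rw [sub_nonneg, div_le_one hB]; linarith
  have hr : (1 + a) / (1 + 2 * a) = 1 - a / (1 + 2 * a) := by field_simp; ring
  have hexp : ((1 + a) / (1 + 2 * a)) ^ n ≤ Real.exp (-(((n : ℝ) + 1 - 1) * a / (1 + 2 * a))) := by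
    have h2 : 1 - a / (1 + 2 * a) ≤ Real.exp (-(a / (1 + 2 * a))) := by
      have := Real.add_one_le_exp (-(a / (1 + 2 * a)))
      linarith
    calc ((1 + a) / (1 + 2 * a)) ^ n ≤ Real.exp (-(a / (1 + 2 * a))) ^ n := by
          rw [hr]; exact pow_le_pow_left₀ hx h2 n
      _ = Real.exp (-(((n : ℝ) + 1 - 1) * a / (1 + 2 * a))) := by
          rw [← Real.exp_nat_mul]; ring_nf
  have hfin : (1 / (1 + 2 * a)) * ((1 + a) / (1 + 2 * a)) ^ n ≤
      (2 / (1 + 2 * a)) * Real.exp (-(((n : ℝ) + 1 - 1) * a / (1 + 2 * a))) := by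
    apply mul_le_mul _ hexp (by positivity) (by positivity)
    rw [div_le_div_iff₀ hB hB]; nlinarith
  push_cast
  exact le_trans h1 hfin
end

section
/- Let λ₀ ≥ 0 and define λ_{i+1} = 1 - 2·∏_{k=0}^{i}(1+λ_k)^{-1} + (1+λ₀)·∏_{k=0}^{i}(1+λ_k)^{-2}. Then the recursion can be rewritten as λ_{i+1} = 2λ_i/(1+λ_i) - α_i·λ_i/(1+λ_i)², where α_i = (1+λ₀)^{-1}·∏_{k=1}^{i-1}(1+λ_k)^{-2} satisfies 0 < α_i ≤ 1. -/
theorem eigenvalue_seq_recursion_rewrite (l : ℕ → ℝ) (h0 : 0 ≤ l 0)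
    (hrec : ∀ i, l (i + 1) =
      1 - 2 * ∏ k ∈ Finset.range (i + 1), (1 + l k)⁻¹
        + (1 + l 0) * ∏ k ∈ Finset.range (i + 1), ((1 + l k)⁻¹) ^ 2) :
    ∀ i : ℕ, 1 ≤ i →
      (l (i + 1) = 2 * l i / (1 + l i)
          - ((1 + l 0)⁻¹ * ∏ k ∈ Finset.Ico 1 i, ((1 + l k)⁻¹) ^ 2) * l i / (1 + l i) ^ 2) ∧
      0 < (1 + l 0)⁻¹ * ∏ k ∈ Finset.Ico 1 i, ((1 + l k)⁻¹) ^ 2 ∧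
      (1 + l 0)⁻¹ * ∏ k ∈ Finset.Ico 1 i, ((1 + l k)⁻¹) ^ 2 ≤ 1 := by
  have hnn : ∀ i, 0 ≤ l i := by
    intro i
    cases i with
    | zero => exact h0
    | succ n =>
      rw [hrec n]
      set P := ∏ k ∈ Finset.range (n + 1), (1 + l k)⁻¹ with hP
      have hsq : ∏ k ∈ Finset.range (n + 1), ((1 + l k)⁻¹) ^ 2 = P ^ 2 := by
        rw [hP, Finset.prod_pow]
      rw [hsq]
      nlinarith [sq_nonneg (1 - P), sq_nonneg P, mul_nonneg h0 (sq_nonneg P)]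
  have hpos : ∀ k, (0:ℝ) < 1 + l k := fun k => by linarith [hnn k]
  intro i hi
  obtain ⟨j, rfl⟩ : ∃ j, i = j + 1 := ⟨i - 1, (Nat.succ_pred_eq_of_pos hi).symm⟩
  set P := ∏ k ∈ Finset.range (j + 1), (1 + l k)⁻¹ with hPdef
  have hPpos : 0 < P := Finset.prod_pos (fun k _ => inv_pos.mpr (hpos k))
  have hsq : ∏ k ∈ Finset.range (j + 1), ((1 + l k)⁻¹) ^ 2 = P ^ 2 := by
    rw [hPdef, Finset.prod_pow]
  -- rewrite the α expression
  have hIco : (1 + l 0)⁻¹ * ∏ k ∈ Finset.Ico 1 (j + 1), ((1 + l k)⁻¹) ^ 2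
      = (1 + l 0) * P ^ 2 := by
    set Q := ∏ k ∈ Finset.Ico 1 (j + 1), (1 + l k)⁻¹ with hQ
    have hPsplit : P = (1 + l 0)⁻¹ * Q := by
      rw [hPdef, Finset.range_eq_Ico, Finset.prod_eq_prod_Ico_succ_bot (Nat.succ_pos j), hQ]
    have hQsq : ∏ k ∈ Finset.Ico 1 (j + 1), ((1 + l k)⁻¹) ^ 2 = Q ^ 2 := by
      rw [hQ, Finset.prod_pow]
    rw [hQsq, hPsplit]
    have h0ne : (1 + l 0) ≠ 0 := (hpos 0).ne'
    field_simp
  have hx : l (j + 1) = 1 - 2 * P + (1 + l 0) * P ^ 2 := by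
    rw [hrec j, hsq]
  have hnext : l (j + 1 + 1)
      = 1 - 2 * (P * (1 + l (j + 1))⁻¹) + (1 + l 0) * (P ^ 2 * ((1 + l (j + 1))⁻¹) ^ 2) := by
    rw [hrec (j + 1), Finset.prod_range_succ (fun k => (1 + l k)⁻¹) (j + 1),
      Finset.prod_range_succ (fun k => ((1 + l k)⁻¹) ^ 2) (j + 1), hsq, ← hPdef]
  refine ⟨?_, ?_, ?_⟩
  · rw [hIco, hnext]
    have h1 : (0:ℝ) < 1 + l (j + 1) := hpos (j + 1)
    field_simp
    nlinarith [hx, sq_nonneg P]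
  · rw [hIco]
    positivity
  · rw [hIco]
    have hP1 : P ≤ (1 + l 0)⁻¹ := by
      rw [hPdef, Finset.prod_range_succ']
      have hprod : ∏ k ∈ Finset.range j, (1 + l (k + 1))⁻¹ ≤ 1 :=
        Finset.prod_le_one (fun k _ => le_of_lt (inv_pos.mpr (hpos (k + 1))))
          (fun k _ => inv_le_one_of_one_le₀ (by linarith [hnn (k + 1)]))
      calc (∏ k ∈ Finset.range j, (1 + l (k + 1))⁻¹) * (1 + l 0)⁻¹
          ≤ 1 * (1 + l 0)⁻¹ := by
            apply mul_le_mul_of_nonneg_right hprod (le_of_lt (inv_pos.mpr (hpos 0)))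
        _ = (1 + l 0)⁻¹ := one_mul _
    have h0p := hpos 0
    have : (1 + l 0) * P ^ 2 ≤ (1 + l 0) * ((1 + l 0)⁻¹) ^ 2 := by
      apply mul_le_mul_of_nonneg_left _ (le_of_lt h0p)
      exact pow_le_pow_left₀ (le_of_lt hPpos) hP1 2
    calc (1 + l 0) * P ^ 2 ≤ (1 + l 0) * ((1 + l 0)⁻¹) ^ 2 := this
      _ = (1 + l 0)⁻¹ := by field_simp
      _ ≤ 1 := inv_le_one_of_one_le₀ (by linarith)
end

section
/- Let λ₀, μ₀ > 0 with λ₀ ≥ μ₀, and define two sequences by λ_{i+1} = 2λ_i/(1+λ_i) - α_i λ_i/(1+λ_i)² and μ_{i+1} = 2μ_i/(1+μ_i) - β_i μ_i/(1+μ_i)², where α_i = (1+λ₀)^{-1}∏_{k=1}^{i-1}(1+λ_k)^{-2} and β_i = (1+μ₀)^{-1}∏_{k=1}^{i-1}(1+μ_k)^{-2}. Then λ_i ≥ μ_i for all i ≥ 1. -/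
private lemma f_pos {x a : ℝ} (hx : 0 < x) (ha : 0 < a) (ha1 : a ≤ 1) :
    0 < 2 * x / (1 + x) - a * x / (1 + x) ^ 2 := by
  have hx1 : (0:ℝ) < 1 + x := by linarith
  have key : 2 * x / (1 + x) - a * x / (1 + x) ^ 2 = x * (2 * (1 + x) - a) / (1 + x) ^ 2 := by
    field_simp
  rw [key]
  apply div_pos _ (by positivity)
  apply mul_pos hx
  nlinarith

private lemma f_mono {x y a b : ℝ} (hy : 0 < y) (hxy : y ≤ x) (ha : 0 < a) (hab : a ≤ b)
    (hb1 : b ≤ 1) :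
    2 * y / (1 + y) - b * y / (1 + y) ^ 2 ≤ 2 * x / (1 + x) - a * x / (1 + x) ^ 2 := by
  have hx : 0 < x := lt_of_lt_of_le hy hxy
  have hy1 : (0:ℝ) < 1 + y := by linarith
  have hx1 : (0:ℝ) < 1 + x := by linarith
  have step1 : 2 * x / (1 + x) - b * x / (1 + x) ^ 2 ≤ 2 * x / (1 + x) - a * x / (1 + x) ^ 2 := by
    gcongr
  refine le_trans ?_ step1
  have hL : 2 * y / (1 + y) - b * y / (1 + y) ^ 2 = (2 * y * (1 + y) - b * y) / (1 + y) ^ 2 := by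
    field_simp
  have hR : 2 * x / (1 + x) - b * x / (1 + x) ^ 2 = (2 * x * (1 + x) - b * x) / (1 + x) ^ 2 := by
    field_simp
  rw [hL, hR, div_le_div_iff₀ (by positivity) (by positivity)]
  have hfac : 0 ≤ (x - y) * ((2 - b) + 2 * (x + y) + (2 + b) * (x * y)) := by
    apply mul_nonneg (by linarith)
    nlinarith [mul_pos hx hy]
  nlinarith [hfac]

theorem eigenvalue_order_preserved (l m : ℕ → ℝ) (hm0 : 0 < m 0) (hl0 : 0 < l 0)
    (hlm : m 0 ≤ l 0)
    (hl : ∀ i, l (i + 1) = 2 * l i / (1 + l i)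
        - ((1 + l 0)⁻¹ * ∏ k ∈ Finset.Ico 1 i, ((1 + l k)⁻¹) ^ 2) * l i / (1 + l i) ^ 2)
    (hm : ∀ i, m (i + 1) = 2 * m i / (1 + m i)
        - ((1 + m 0)⁻¹ * ∏ k ∈ Finset.Ico 1 i, ((1 + m k)⁻¹) ^ 2) * m i / (1 + m i) ^ 2) :
    ∀ i, 1 ≤ i → m i ≤ l i := by
  have key : ∀ i, 0 < m i ∧ 0 < l i ∧ m i ≤ l i := by
    intro i
    induction i using Nat.strong_induction_on with
    | _ i ih =>
      match i with
      | 0 => exact ⟨hm0, hl0, hlm⟩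
      | (j+1) =>
        have hmpos : ∀ k, k ≤ j → 0 < m k := fun k hk => (ih k (Nat.lt_succ_of_le hk)).1
        have hlpos : ∀ k, k ≤ j → 0 < l k := fun k hk => (ih k (Nat.lt_succ_of_le hk)).2.1
        have hml : ∀ k, k ≤ j → m k ≤ l k := fun k hk => (ih k (Nat.lt_succ_of_le hk)).2.2
        have ha_pos : 0 < (1 + l 0)⁻¹ * ∏ k ∈ Finset.Ico 1 j, ((1 + l k)⁻¹) ^ 2 := by
          apply mul_pos (inv_pos.2 (by linarith : (0:ℝ) < 1 + l 0))
          apply Finset.prod_pos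
          intro k hk
          have hk' : k ≤ j := le_of_lt (Finset.mem_Ico.1 hk).2
          have := hlpos k hk'
          positivity
        have hb_pos : 0 < (1 + m 0)⁻¹ * ∏ k ∈ Finset.Ico 1 j, ((1 + m k)⁻¹) ^ 2 := by
          apply mul_pos (inv_pos.2 (by linarith : (0:ℝ) < 1 + m 0))
          apply Finset.prod_pos
          intro k hk
          have hk' : k ≤ j := le_of_lt (Finset.mem_Ico.1 hk).2
          have := hmpos k hk'
          positivity
        have hab : (1 + l 0)⁻¹ * ∏ k ∈ Finset.Ico 1 j, ((1 + l k)⁻¹) ^ 2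
            ≤ (1 + m 0)⁻¹ * ∏ k ∈ Finset.Ico 1 j, ((1 + m k)⁻¹) ^ 2 := by
          have h0 : (1 + l 0)⁻¹ ≤ (1 + m 0)⁻¹ := by
            apply inv_anti₀ (by linarith) (by linarith)
          have hprod : (∏ k ∈ Finset.Ico 1 j, ((1 + l k)⁻¹) ^ 2)
              ≤ ∏ k ∈ Finset.Ico 1 j, ((1 + m k)⁻¹) ^ 2 := by
            apply Finset.prod_le_prod
            · intro k hk
              have hk' : k ≤ j := le_of_lt (Finset.mem_Ico.1 hk).2
              have := hlpos k hk'
              positivity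
            · intro k hk
              have hk' : k ≤ j := le_of_lt (Finset.mem_Ico.1 hk).2
              have h1 := hmpos k hk'
              have h2 := hml k hk'
              have h3 : (1 + l k)⁻¹ ≤ (1 + m k)⁻¹ := by
                apply inv_anti₀ (by linarith) (by linarith)
              have h4 : (0:ℝ) ≤ (1 + l k)⁻¹ := by
                have := hlpos k hk'
                positivity
              exact pow_le_pow_left₀ h4 h3 2
          apply mul_le_mul h0 hprod
          · apply le_of_lt
            apply Finset.prod_pos
            intro k hk
            have hk' : k ≤ j := le_of_lt (Finset.mem_Ico.1 hk).2
            have := hlpos k hk'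
            positivity
          · have : (0:ℝ) < 1 + m 0 := by linarith
            positivity
        have hb1 : (1 + m 0)⁻¹ * ∏ k ∈ Finset.Ico 1 j, ((1 + m k)⁻¹) ^ 2 ≤ 1 := by
          apply mul_le_one₀
          · rw [inv_le_one_iff₀]; right; linarith
          · exact le_of_lt (by
              apply Finset.prod_pos
              intro k hk
              have hk' : k ≤ j := le_of_lt (Finset.mem_Ico.1 hk).2
              have := hmpos k hk'
              positivity)
          · apply Finset.prod_le_one
            · intro k hk
              have hk' : k ≤ j := le_of_lt (Finset.mem_Ico.1 hk).2
              have := hmpos k hk'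
              positivity
            · intro k hk
              have hk' : k ≤ j := le_of_lt (Finset.mem_Ico.1 hk).2
              have h := hmpos k hk'
              have h1 : (1 + m k)⁻¹ ≤ 1 := by
                rw [inv_le_one_iff₀]; right; linarith
              have h2 : (0:ℝ) ≤ (1 + m k)⁻¹ := by positivity
              nlinarith
        have hmj := hmpos j le_rfl
        have hlj := hlpos j le_rfl
        have hmlj := hml j le_rfl
        rw [hl j, hm j]
        refine ⟨f_pos hmj hb_pos hb1, f_pos hlj ha_pos (le_trans hab hb1), ?_⟩
        exact f_mono hmj hmlj ha_pos hab hb1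
  exact fun i _ => (key i).2.2
end

section
/- Let Γ ≻ 0, C ⪰ 0, H ∈ ℝ^{n×d}, and let W ∈ ℝ^{n×r} satisfy Wᵀ Γ W = I_r and H C Hᵀ W = Γ W Λ, where Λ is a diagonal matrix with positive diagonal entries λ₁,…,λ_r, and suppose that H C Hᵀ = Γ W Λ Wᵀ Γ. Then the misfit map 𝓜 = (I + H C Hᵀ Γ⁻¹)⁻¹ decomposes as 𝓜 = Γ W (I + Λ)⁻¹ Wᵀ + 𝓢, where 𝓢 = I - Γ W Wᵀ. -/
open Matrix

theorem misfit_map_spectral_decomposition {n d r : ℕ}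
    (Γ : Matrix (Fin n) (Fin n) ℝ) (hΓ : Γ.PosDef)
    (C : Matrix (Fin d) (Fin d) ℝ) (hC : C.PosSemidef)
    (H : Matrix (Fin n) (Fin d) ℝ)
    (W : Matrix (Fin n) (Fin r) ℝ) (hW : Wᵀ * Γ * W = 1)
    (l : Fin r → ℝ) (hl : ∀ ℓ, 0 < l ℓ)
    (hdecomp : H * C * Hᵀ = Γ * W * Matrix.diagonal l * Wᵀ * Γ) :
    (1 + H * C * Hᵀ * Γ⁻¹)⁻¹ =
      Γ * W * (1 + Matrix.diagonal l)⁻¹ * Wᵀ + (1 - Γ * W * Wᵀ) := by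
  have hΓdet : IsUnit Γ.det := isUnit_iff_ne_zero.mpr hΓ.det_pos.ne'
  have hΓinv : Γ * Γ⁻¹ = 1 := Matrix.mul_nonsing_inv _ hΓdet
  set D := Matrix.diagonal l with hD
  have hDiag : (1 : Matrix (Fin r) (Fin r) ℝ) + D = Matrix.diagonal (fun i => 1 + l i) := by
    rw [hD, ← Matrix.diagonal_one, Matrix.diagonal_add]
  have hdet : IsUnit ((1 + D).det) := by
    rw [hDiag, Matrix.det_diagonal]
    exact isUnit_iff_ne_zero.mpr (ne_of_gt (Finset.prod_pos (fun i _ => by linarith [hl i])))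
  have hEinv : (1 + D) * (1 + D)⁻¹ = 1 := Matrix.mul_nonsing_inv _ hdet
  have h1 : H * C * Hᵀ * Γ⁻¹ = Γ * W * D * Wᵀ := by
    rw [hdecomp, Matrix.mul_assoc, hΓinv, Matrix.mul_one]
  have hmid : ∀ (X : Matrix (Fin r) (Fin n) ℝ), Wᵀ * (Γ * (W * X)) = X := by
    intro X
    rw [← Matrix.mul_assoc, ← Matrix.mul_assoc, hW, Matrix.one_mul]
  have key : ∀ A B : Matrix (Fin r) (Fin r) ℝ,
      (Γ * W * A * Wᵀ) * (Γ * W * B * Wᵀ) = Γ * W * (A * B) * Wᵀ := by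
    intro A B
    simp only [Matrix.mul_assoc]
    rw [hmid]
  apply Matrix.inv_eq_right_inv
  rw [h1]
  have e1 : Γ * W * D * Wᵀ * (Γ * W * (1 + D)⁻¹ * Wᵀ) = Γ * W * (D * (1 + D)⁻¹) * Wᵀ :=
    key D _
  have e2 : Γ * W * D * Wᵀ * (Γ * W * Wᵀ) = Γ * W * D * Wᵀ := by
    have := key D 1
    simpa [Matrix.mul_one] using this
  have e3 : Γ * W * (1 + D)⁻¹ * Wᵀ + Γ * W * (D * (1 + D)⁻¹) * Wᵀ = Γ * W * Wᵀ := by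
    rw [← Matrix.add_mul, ← Matrix.mul_add]
    have h4 : (1 + D)⁻¹ + D * (1 + D)⁻¹ = 1 :=
      calc (1 + D)⁻¹ + D * (1 + D)⁻¹ = (1 + D) * (1 + D)⁻¹ := by
            rw [Matrix.add_mul, Matrix.one_mul]
        _ = 1 := hEinv
    rw [h4, Matrix.mul_one]
  rw [Matrix.add_mul, Matrix.one_mul, Matrix.mul_add, Matrix.mul_sub, Matrix.mul_one, e1, e2,
    sub_self, add_zero]
  have h5 : Γ * W * (1 + D)⁻¹ * Wᵀ + (1 - Γ * W * Wᵀ) + Γ * W * (D * (1 + D)⁻¹) * Wᵀ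
      = (Γ * W * (1 + D)⁻¹ * Wᵀ + Γ * W * (D * (1 + D)⁻¹) * Wᵀ) + (1 - Γ * W * Wᵀ) := by
    abel
  rw [h5, e3]
  abel
end

section
/- With Γ ≻ 0, W ∈ ℝ^{n×r} satisfying Wᵀ Γ W = I_r, 𝓟 = Γ W Wᵀ, 𝓢 = I - 𝓟, and for each i a diagonal matrix Λ_i with positive entries, define 𝓜_i = Γ W (I + Λ_i)⁻¹ Wᵀ + 𝓢. Then 𝓟 𝓜_i = 𝓜_i 𝓟 and 𝓢 𝓜_i = 𝓜_i 𝓢 for every i, and the product 𝓜_i 𝓜_{i-1} ⋯ 𝓜_0 equals Γ W (∏_{k=0}^{i}(I+Λ_k)⁻¹) Wᵀ + 𝓢. -/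
open Matrix

theorem misfit_maps_commute_and_compound {n r : ℕ}
    (Γ : Matrix (Fin n) (Fin n) ℝ) (hΓ : Γ.PosDef)
    (W : Matrix (Fin n) (Fin r) ℝ) (hW : Wᵀ * Γ * W = 1)
    (Λ : ℕ → Fin r → ℝ) (hΛ : ∀ i ℓ, 0 < Λ i ℓ)
    (M : ℕ → Matrix (Fin n) (Fin n) ℝ)
    (hM : ∀ i, M i = Γ * W * (1 + Matrix.diagonal (Λ i))⁻¹ * Wᵀ + (1 - Γ * W * Wᵀ))
    (N : ℕ → Matrix (Fin n) (Fin n) ℝ)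
    (hN0 : N 0 = M 0) (hNs : ∀ i, N (i + 1) = M (i + 1) * N i) :
    (∀ i, (Γ * W * Wᵀ) * M i = M i * (Γ * W * Wᵀ) ∧
          (1 - Γ * W * Wᵀ) * M i = M i * (1 - Γ * W * Wᵀ)) ∧
    (∀ i, N i = Γ * W *
        Matrix.diagonal (fun ℓ => ∏ k ∈ Finset.range (i + 1), (1 + Λ k ℓ)⁻¹) * Wᵀ
        + (1 - Γ * W * Wᵀ)) := by
  -- the inverse of 1 + diagonal is explicit
  have hD : ∀ i, (1 + Matrix.diagonal (Λ i))⁻¹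
      = Matrix.diagonal (fun ℓ => (1 + Λ i ℓ)⁻¹) := by
    intro i
    have h1 : (1 : Matrix (Fin r) (Fin r) ℝ) + Matrix.diagonal (Λ i)
        = Matrix.diagonal (fun ℓ => 1 + Λ i ℓ) := by
      rw [← Matrix.diagonal_one, Matrix.diagonal_add]
    rw [h1]
    apply Matrix.inv_eq_right_inv
    rw [Matrix.diagonal_mul_diagonal]
    have : (fun ℓ => (1 + Λ i ℓ) * (1 + Λ i ℓ)⁻¹) = fun _ : Fin r => (1 : ℝ) :=
      funext fun ℓ => mul_inv_cancel₀ (by have := hΛ i ℓ; linarith)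
    rw [this, Matrix.diagonal_one]
  set P : Matrix (Fin n) (Fin n) ℝ := Γ * W * Wᵀ with hP
  have cancel : ∀ X : Matrix (Fin r) (Fin n) ℝ, Wᵀ * (Γ * (W * X)) = X := by
    intro X
    rw [← Matrix.mul_assoc, ← Matrix.mul_assoc, hW, Matrix.one_mul]
  have f1 : ∀ d e : Fin r → ℝ,
      (Γ * W * Matrix.diagonal d * Wᵀ) * (Γ * W * Matrix.diagonal e * Wᵀ)
        = Γ * W * Matrix.diagonal (fun ℓ => d ℓ * e ℓ) * Wᵀ := by
    intro d e
    calc (Γ * W * Matrix.diagonal d * Wᵀ) * (Γ * W * Matrix.diagonal e * Wᵀ)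
        = Γ * W * Matrix.diagonal d * (Wᵀ * (Γ * (W * (Matrix.diagonal e * Wᵀ)))) := by
          simp only [Matrix.mul_assoc]
      _ = Γ * W * Matrix.diagonal d * (Matrix.diagonal e * Wᵀ) := by rw [cancel]
      _ = Γ * W * (Matrix.diagonal d * Matrix.diagonal e) * Wᵀ := by
          simp only [Matrix.mul_assoc]
      _ = Γ * W * Matrix.diagonal (fun ℓ => d ℓ * e ℓ) * Wᵀ := by
          rw [Matrix.diagonal_mul_diagonal]
  have hP1 : P = Γ * W * Matrix.diagonal (fun _ : Fin r => (1 : ℝ)) * Wᵀ := by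
    rw [Matrix.diagonal_one, Matrix.mul_one]
  have fAP : ∀ d : Fin r → ℝ,
      (Γ * W * Matrix.diagonal d * Wᵀ) * P = Γ * W * Matrix.diagonal d * Wᵀ := by
    intro d; rw [hP1, f1]; simp
  have fPA : ∀ d : Fin r → ℝ,
      P * (Γ * W * Matrix.diagonal d * Wᵀ) = Γ * W * Matrix.diagonal d * Wᵀ := by
    intro d; rw [hP1, f1]; simp
  have fPP : P * P = P := by rw [hP1, f1]; simp [← hP1]
  have expand : ∀ d e : Fin r → ℝ,
      (Γ * W * Matrix.diagonal d * Wᵀ + (1 - P)) *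
      (Γ * W * Matrix.diagonal e * Wᵀ + (1 - P))
        = Γ * W * Matrix.diagonal (fun ℓ => d ℓ * e ℓ) * Wᵀ + (1 - P) := by
    intro d e
    have h1 : (Γ * W * Matrix.diagonal d * Wᵀ) * (1 - P) = 0 := by
      rw [mul_sub, mul_one, fAP, sub_self]
    have h2 : (1 - P) * (Γ * W * Matrix.diagonal e * Wᵀ) = 0 := by
      rw [sub_mul, one_mul, fPA, sub_self]
    have h3 : ((1 : Matrix (Fin n) (Fin n) ℝ) - P) * (1 - P) = 1 - P := by
      rw [mul_sub, mul_one, sub_mul, one_mul, fPP, sub_self, sub_zero]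
    rw [add_mul, mul_add, mul_add, f1, h1, h2, h3, add_zero, zero_add]
  have hMrep : ∀ i, M i = Γ * W * Matrix.diagonal (fun ℓ => (1 + Λ i ℓ)⁻¹) * Wᵀ + (1 - P) := by
    intro i; rw [hM i, hD i]
  constructor
  · intro i
    have hPM : P * M i = Γ * W * Matrix.diagonal (fun ℓ => (1 + Λ i ℓ)⁻¹) * Wᵀ := by
      rw [hMrep i, mul_add, fPA, mul_sub, mul_one, fPP, sub_self, add_zero]
    have hMP : M i * P = Γ * W * Matrix.diagonal (fun ℓ => (1 + Λ i ℓ)⁻¹) * Wᵀ := by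
      rw [hMrep i, add_mul, fAP, sub_mul, one_mul, fPP, sub_self, add_zero]
    refine ⟨hPM.trans hMP.symm, ?_⟩
    rw [sub_mul, mul_sub, one_mul, mul_one, hPM, hMP]
  · intro i
    induction i with
    | zero =>
      have he : (fun ℓ => ∏ k ∈ Finset.range (0 + 1), (1 + Λ k ℓ)⁻¹)
          = fun ℓ : Fin r => (1 + Λ 0 ℓ)⁻¹ :=
        funext fun ℓ => by rw [zero_add, Finset.prod_range_one]
      rw [he, hN0, hMrep 0]
    | succ i ih =>
      have he : (fun ℓ : Fin r => (1 + Λ (i + 1) ℓ)⁻¹ * ∏ k ∈ Finset.range (i + 1), (1 + Λ k ℓ)⁻¹)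
          = fun ℓ => ∏ k ∈ Finset.range (i + 1 + 1), (1 + Λ k ℓ)⁻¹ := by
        funext ℓ
        conv_rhs => rw [Finset.prod_range_succ]
        exact mul_comm _ _
      rw [hNs i, ih, hMrep (i + 1), expand, he]
end

section
/- Let 𝓟 be a projector (𝓟² = 𝓟) on ℝ^n and let θ ∈ ℝ^n. Suppose 𝓜_{i:0} = ∑_{ℓ=1}^{r} c_{ℓ,i} Γ w_ℓ w_ℓᵀ + (I - 𝓟) with 𝓟 = Γ W Wᵀ, Wᵀ Γ W = I_r, and 0 < c_{ℓ,i} ≤ e^{-(i-1)γ} for all ℓ. Then ‖𝓜_{i:0} 𝓟 θ‖_{Γ⁻¹} ≤ e^{-(i-1)γ} ‖𝓟 θ‖_{Γ⁻¹}. -/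
open Matrix

lemma quad_form_aux {n m : ℕ} (A : Matrix (Fin n) (Fin m) ℝ)
    (B : Matrix (Fin n) (Fin n) ℝ) (x : Fin m → ℝ) :
    (A *ᵥ x) ⬝ᵥ (B *ᵥ (A *ᵥ x)) = x ⬝ᵥ ((Aᵀ * B * A) *ᵥ x) := by
  rw [Matrix.dotProduct_mulVec, Matrix.vecMul_mulVec, Matrix.mul_assoc,
    ← Matrix.dotProduct_mulVec, Matrix.mulVec_mulVec, Matrix.mul_assoc]

theorem misfit_exponential_decay_weighted_norm {n r : ℕ}
    (Γ : Matrix (Fin n) (Fin n) ℝ) (hΓ : Γ.PosDef)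
    (W : Matrix (Fin n) (Fin r) ℝ) (hW : Wᵀ * Γ * W = 1)
    (c : Fin r → ℝ) (i : ℕ) (γ : ℝ)
    (hc : ∀ ℓ, 0 < c ℓ ∧ c ℓ ≤ Real.exp (-((i : ℝ) - 1) * γ))
    (θ : Fin n → ℝ) :
    let P := Γ * W * Wᵀ
    let M := Γ * W * Matrix.diagonal c * Wᵀ + (1 - P)
    Real.sqrt ((M *ᵥ (P *ᵥ θ)) ⬝ᵥ (Γ⁻¹ *ᵥ (M *ᵥ (P *ᵥ θ)))) ≤
      Real.exp (-((i : ℝ) - 1) * γ) *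
        Real.sqrt ((P *ᵥ θ) ⬝ᵥ (Γ⁻¹ *ᵥ (P *ᵥ θ))) := by
  intro P M
  set E : ℝ := Real.exp (-((i : ℝ) - 1) * γ) with hE
  have hEpos : (0:ℝ) < E := Real.exp_pos _
  have hdet : IsUnit Γ.det := hΓ.det_pos.ne'.isUnit
  have hΓinv : Γ * Γ⁻¹ = 1 := Matrix.mul_nonsing_inv Γ hdet
  have hsym : Γᵀ = Γ := hΓ.1
  -- Wᵀ absorbs P from the right
  have hWtP : Wᵀ * P = Wᵀ := by
    show Wᵀ * (Γ * W * Wᵀ) = Wᵀ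
    rw [← Matrix.mul_assoc, ← Matrix.mul_assoc, hW, Matrix.one_mul]
  have hPP : P * P = P := by
    show (Γ * W * Wᵀ) * P = P
    rw [Matrix.mul_assoc (Γ * W) Wᵀ P, hWtP]
  -- M * P = Γ * W * diagonal c * Wᵀ
  have hMP : M * P = Γ * W * Matrix.diagonal c * Wᵀ := by
    show (Γ * W * Matrix.diagonal c * Wᵀ + (1 - P)) * P = _
    rw [Matrix.add_mul, Matrix.sub_mul, Matrix.one_mul, hPP, sub_self, add_zero,
      Matrix.mul_assoc (Γ * W * Matrix.diagonal c) Wᵀ P, hWtP]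
  set A : Matrix (Fin n) (Fin r) ℝ := Γ * W * Matrix.diagonal c with hA
  -- the vector M *ᵥ (P *ᵥ θ)
  have hv : M *ᵥ (P *ᵥ θ) = (A * Wᵀ) *ᵥ θ := by
    rw [Matrix.mulVec_mulVec, hMP]
  -- compute (A * Wᵀ)ᵀ * Γ⁻¹ * (A * Wᵀ) = W * diagonal (fun ℓ => c ℓ * c ℓ) * Wᵀ
  have hquad1 : (A * Wᵀ)ᵀ * Γ⁻¹ * (A * Wᵀ) =
      W * Matrix.diagonal (fun ℓ => c ℓ * c ℓ) * Wᵀ := by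
    have hAt : (A * Wᵀ)ᵀ = W * Matrix.diagonal c * Wᵀ * Γ := by
      rw [hA]
      simp only [Matrix.transpose_mul, Matrix.transpose_transpose,
        Matrix.diagonal_transpose, hsym]
      simp only [Matrix.mul_assoc]
    rw [hAt, hA]
    calc W * Matrix.diagonal c * Wᵀ * Γ * Γ⁻¹ * (Γ * W * Matrix.diagonal c * Wᵀ)
        = W * Matrix.diagonal c * Wᵀ * (Γ * Γ⁻¹) * (Γ * W * Matrix.diagonal c * Wᵀ) := by
          rw [Matrix.mul_assoc (W * Matrix.diagonal c * Wᵀ) Γ Γ⁻¹]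
      _ = W * Matrix.diagonal c * (Wᵀ * Γ * W) * Matrix.diagonal c * Wᵀ := by
          rw [hΓinv, Matrix.mul_one]
          simp only [Matrix.mul_assoc]
      _ = W * Matrix.diagonal (fun ℓ => c ℓ * c ℓ) * Wᵀ := by
          rw [hW, Matrix.mul_one, Matrix.mul_assoc W (Matrix.diagonal c),
            Matrix.diagonal_mul_diagonal]
  -- compute Pᵀ * Γ⁻¹ * P = W * Wᵀ
  have hquad2 : Pᵀ * Γ⁻¹ * P = W * Wᵀ := by
    have hPt : Pᵀ = W * Wᵀ * Γ := by
      show (Γ * W * Wᵀ)ᵀ = _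
      simp only [Matrix.transpose_mul, Matrix.transpose_transpose, hsym]
      rw [Matrix.mul_assoc]
    rw [hPt]
    calc W * Wᵀ * Γ * Γ⁻¹ * P
        = W * Wᵀ * (Γ * Γ⁻¹) * P := by rw [Matrix.mul_assoc (W * Wᵀ) Γ Γ⁻¹]
      _ = W * (Wᵀ * P) := by rw [hΓinv, Matrix.mul_one, Matrix.mul_assoc]
      _ = W * Wᵀ := by rw [hWtP]
  -- reduce both quadratic forms to sums
  set y : Fin r → ℝ := Wᵀ *ᵥ θ with hy
  have hsum : ∀ (d : Fin r → ℝ),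
      θ ⬝ᵥ ((W * Matrix.diagonal d * Wᵀ) *ᵥ θ) = ∑ ℓ, d ℓ * (y ℓ * y ℓ) := by
    intro d
    have : (W * Matrix.diagonal d * Wᵀ) *ᵥ θ
        = W *ᵥ (Matrix.diagonal d *ᵥ y) := by
      rw [Matrix.mulVec_mulVec, Matrix.mulVec_mulVec]
    rw [this, Matrix.dotProduct_mulVec, ← Matrix.mulVec_transpose, ← hy]
    simp only [dotProduct, Matrix.mulVec_diagonal]
    exact Finset.sum_congr rfl (fun ℓ _ => by ring)
  have h1 : (M *ᵥ (P *ᵥ θ)) ⬝ᵥ (Γ⁻¹ *ᵥ (M *ᵥ (P *ᵥ θ)))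
      = ∑ ℓ, (c ℓ * c ℓ) * (y ℓ * y ℓ) := by
    rw [hv, quad_form_aux, hquad1, hsum]
  have h2 : (P *ᵥ θ) ⬝ᵥ (Γ⁻¹ *ᵥ (P *ᵥ θ)) = ∑ ℓ, y ℓ * y ℓ := by
    have hone : W * Wᵀ = W * Matrix.diagonal (fun _ : Fin r => (1:ℝ)) * Wᵀ := by
      rw [Matrix.diagonal_one, Matrix.mul_one]
    rw [quad_form_aux, hquad2, hone, hsum]
    simp
  rw [h1, h2]
  have hq1 : ∑ ℓ, (c ℓ * c ℓ) * (y ℓ * y ℓ) ≤ E ^ 2 * ∑ ℓ, y ℓ * y ℓ := by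
    rw [Finset.mul_sum]
    apply Finset.sum_le_sum
    intro ℓ _
    have h0 := (hc ℓ).1
    have hle := (hc ℓ).2
    have hcc : c ℓ * c ℓ ≤ E ^ 2 := by nlinarith
    nlinarith [mul_self_nonneg (y ℓ), mul_self_nonneg (c ℓ)]
  calc Real.sqrt (∑ ℓ, (c ℓ * c ℓ) * (y ℓ * y ℓ))
      ≤ Real.sqrt (E ^ 2 * ∑ ℓ, y ℓ * y ℓ) := Real.sqrt_le_sqrt hq1
    _ = E * Real.sqrt (∑ ℓ, y ℓ * y ℓ) := by
        rw [Real.sqrt_mul (sq_nonneg E), Real.sqrt_sq hEpos.le]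
end
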